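/- arXiv:math-ph/9908006 — 2 statements merged into one kernel-verified Lean document; each statement's English description precedes it below -/
import Mathlib

section
/- The Ursell function k := ln*(e^{−βE}) has the representation k(ω) = Σ_{G connected graph on ω} ∏_{{x,y} ∈ G} (e^{−βφ(x,y)} − 1) for every nonempty finite ω ⊆ α, and k(∅) = 0. Equivalently, exp* k = e^{−βE}, i.e. e^{−βE(ω)} = Σ_{n≥0} (1/n!) Σ_{(ω₁,…,ω_n) partition of ω into n nonempty parts} k(ω₁)⋯k(ω_n). -/
/-!
Expanding `e^{-βE(ω)} = ∏_{x ≠ y} (1 + f(x, y))` over edge sets, with `f = e^{-βφ} - 1`, and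
splitting a graph on `insert x ω` along the connected component of `x` gives the recursion
`e^{-βE}(insert x ω) = Σ_{ζ ⊆ ω} k(insert x ζ) · e^{-βE}(ω \ ζ)`, which `exp* k` satisfies as
well; hence `exp* k = e^{-βE}`.

For `exp*` this recursion, and the identity `ln* (exp* k) = k`, come from one observation: on sets
avoiding `x`, the shift `D_{{x}}` obeys the Leibniz rule, hence the chain rule, for the convolution
product. Since `exp*` and `ln*` are truncated power series evaluated in the convolution algebra, the
chain rule reduces `ln* (exp* k) = k` to `log'(y) · (1 + y) = 1 - (-y)^N` with `y = exp* k - 1`,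
and `y^N` vanishes on sets with fewer than `N` points.
-/

open Finset

noncomputable section

variable {α : Type*} [DecidableEq α]

/-- The convolution `(ψ₁ * ψ₂)(ω) := Σ_{ω₁ ⊆ ω} ψ₁(ω₁)·ψ₂(ω \ ω₁)`. -/
def starMul (ψ₁ ψ₂ : Finset α → ℝ) : Finset α → ℝ :=
  fun ω => ∑ ω₁ ∈ ω.powerset, ψ₁ ω₁ * ψ₂ (ω \ ω₁)

/-- The unit `1*` of the convolution algebra. -/
def starUnit : Finset α → ℝ := fun ω => if ω = ∅ then 1 else 0

/-- Convolution powers `ψ^{*n}`. -/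
def starPow (ψ : Finset α → ℝ) : ℕ → Finset α → ℝ
  | 0 => starUnit
  | n + 1 => starMul ψ (starPow ψ n)

/-- `exp* ψ := Σ_{n≥0} ψ^{*n}/n!`; for `ψ(∅) = 0` this is a pointwise finite sum since
`ψ^{*n}(ω) = 0` whenever `n > |ω|`. -/
def expStar (ψ : Finset α → ℝ) : Finset α → ℝ :=
  fun ω => ∑ n ∈ Finset.range (ω.card + 1), (n.factorial : ℝ)⁻¹ * starPow ψ n ω

/-- `ln*(1* + ψ) := Σ_{n≥1} ((−1)^{n−1}/n)·ψ^{*n}`, applied to `F = 1* + ψ`. -/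
def lnStar (F : Finset α → ℝ) : Finset α → ℝ :=
  fun ω => ∑ n ∈ Finset.Icc 1 ω.card,
    ((-1 : ℝ) ^ (n - 1) / n) * starPow (fun ζ => F ζ - starUnit ζ) n ω

/-- `(D_{ω'}ψ)(ω) := ψ(ω ∪ ω')` if `ω ∩ ω' = ∅` and `0` otherwise. -/
def Dop (ω' : Finset α) (ψ : Finset α → ℝ) : Finset α → ℝ :=
  fun ω => if Disjoint ω ω' then ψ (ω ∪ ω') else 0

/-- The energy `E(ω) := Σ_{{x,y} ⊆ ω, x ≠ y} φ(x,y)`, each unordered pair counted once. -/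
def energy (φ : α → α → ℝ) (hφ : ∀ x y, φ x y = φ y x) (ω : Finset α) : ℝ :=
  ∑ e ∈ ω.sym2.filter (fun e => ¬ e.IsDiag), Sym2.lift ⟨φ, hφ⟩ e

/-- The Gibbs factor `ω ↦ e^{-βE(ω)}`. -/
def gibbs (β : ℝ) (φ : α → α → ℝ) (hφ : ∀ x y, φ x y = φ y x) : Finset α → ℝ :=
  fun ω => Real.exp (-β * energy φ hφ ω)

/-- Graphs on `ω`: sets of unordered pairs of distinct elements of `ω`. -/
def graphsOn (ω : Finset α) : Finset (Finset (Sym2 α)) :=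
  ω.sym2.powerset.filter fun G => ∀ e ∈ G, ¬ e.IsDiag

/-- The simple graph with vertex set `ω` and edge set `G`. -/
def toGraph (ω : Finset α) (G : Finset (Sym2 α)) : SimpleGraph {x // x ∈ ω} :=
  SimpleGraph.fromEdgeSet {e | e.map Subtype.val ∈ G}

open Classical in
/-- The Ursell function `k(ω) = Σ_{G connected graph on ω} ∏_{{x,y} ∈ G} (e^{−βφ(x,y)} − 1)`
(`= 0` for `ω = ∅`, since there is no connected graph on an empty vertex set). -/
def ursell (β : ℝ) (φ : α → α → ℝ) (hφ : ∀ x y, φ x y = φ y x) (ω : Finset α) : ℝ :=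
  ∑ G ∈ (graphsOn ω).filter (fun G => (toGraph ω G).Connected),
    ∏ e ∈ G, (Real.exp (-β * Sym2.lift ⟨φ, hφ⟩ e) - 1)

/-- `k̄(ω, ζ) := (exp*(−k) * D_ω(e^{−βE}))(ζ)`. -/
def kbar (β : ℝ) (φ : α → α → ℝ) (hφ : ∀ x y, φ x y = φ y x) (ω ζ : Finset α) : ℝ :=
  starMul (expStar fun η => - ursell β φ hφ η) (Dop ω (gibbs β φ hφ)) ζ

open Classical in
/-- Trees on `ω`: connected graphs on `ω` without cycles. -/
def treesOn (ω : Finset α) : Finset (Finset (Sym2 α)) :=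
  (graphsOn ω).filter fun T => (toGraph ω T).IsTree

open Classical in
/-- `Q({x}, ζ) := e^{2βB(|ζ|+1)} Σ_{T tree on {x}∪ζ} ∏_{{y,y'} ∈ T} |e^{−βφ(y,y')} − 1|`,
and `Q({x}, ∅) := e^{2βB}`. -/
def Qone (β B : ℝ) (φ : α → α → ℝ) (hφ : ∀ x y, φ x y = φ y x) (x : α) (ζ : Finset α) : ℝ :=
  if ζ = ∅ then Real.exp (2 * β * B)
  else Real.exp (2 * β * B * (ζ.card + 1)) *
    ∑ T ∈ treesOn (insert x ζ), ∏ e ∈ T, |Real.exp (-β * Sym2.lift ⟨φ, hφ⟩ e) - 1|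

open Classical in
/-- `Q(ω, ζ) := Σ Q({x₁}, ζ₁)⋯Q({x_l}, ζ_l)`, the sum over ordered tuples of pairwise disjoint
(possibly empty) sets `(ζ_x)_{x ∈ ω}` with union `ζ`; `Q(∅, ζ) := 1*(ζ)`. -/
def Qfun (β B : ℝ) (φ : α → α → ℝ) (hφ : ∀ x y, φ x y = φ y x) (ω ζ : Finset α) : ℝ :=
  if ω = ∅ then (if ζ = ∅ then 1 else 0)
  else ∑ g ∈ (Fintype.piFinset fun _ : {x // x ∈ ω} => ζ.powerset).filter
        (fun g => (∀ i j, i ≠ j → Disjoint (g i) (g j)) ∧ Finset.univ.sup g = ζ),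
      ∏ x : {x // x ∈ ω}, Qone β B φ hφ (x : α) (g x)

theorem starMul_comm (f g : Finset α → ℝ) : starMul f g = starMul g f := by
  funext ω
  refine sum_nbij' (ω \ ·) (ω \ ·) ?_ ?_ ?_ ?_ ?_ <;> intro A hA <;>
    simp only [mem_powerset] at hA ⊢
  · exact sdiff_subset
  · exact sdiff_subset
  · exact Finset.sdiff_sdiff_eq_self hA
  · exact Finset.sdiff_sdiff_eq_self hA
  · rw [Finset.sdiff_sdiff_eq_self hA, mul_comm]

theorem starMul_assoc (f g h : Finset α → ℝ) :
    starMul (starMul f g) h = starMul f (starMul g h) := by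
  funext ω
  simp only [starMul, sum_mul, mul_sum]
  rw [sum_sigma', sum_sigma']
  refine sum_bij' (fun p _ => ⟨p.2, p.1 \ p.2⟩) (fun p _ => ⟨p.1 ∪ p.2, p.1⟩)
    ?_ ?_ ?_ ?_ ?_ <;> rintro ⟨A, B⟩ hp <;>
    simp only [mem_sigma, mem_powerset] at hp ⊢
  · exact ⟨hp.2.trans hp.1, sdiff_subset_sdiff hp.1 le_rfl⟩
  · exact ⟨union_subset hp.1 (hp.2.trans sdiff_subset), subset_union_left⟩
  · simp [union_sdiff_of_subset hp.2]
  · simp [union_sdiff_cancel_left (disjoint_of_subset_right hp.2 sdiff_disjoint.symm)]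
  · rw [sdiff_sdiff_left, sup_eq_union, union_sdiff_of_subset hp.2, mul_assoc]

theorem starUnit_starMul (f : Finset α → ℝ) : starMul starUnit f = f := by
  funext ω
  rw [starMul, sum_eq_single_of_mem ∅ (empty_mem_powerset ω)]
  · simp [starUnit]
  · intro ζ _ hζ
    simp [starUnit, hζ]

theorem starMul_add (f g h : Finset α → ℝ) : starMul f (g + h) = starMul f g + starMul f h := by
  funext ω
  simp only [starMul, Pi.add_apply, mul_add, sum_add_distrib]

/-- `Finset α → ℝ` with the convolution `starMul` as multiplication (not the pointwise product
of the `Pi` instances). -/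
def FinsetFun (α : Type*) := Finset α → ℝ

namespace FinsetFun

instance : AddCommGroup (FinsetFun α) := Pi.addCommGroup

instance : Module ℝ (FinsetFun α) := Pi.module _ _ _

instance : CommRing (FinsetFun α) :=
  { (inferInstance : AddCommGroup (FinsetFun α)) with
    mul := starMul
    one := starUnit
    mul_assoc := starMul_assoc
    one_mul := starUnit_starMul
    mul_one := fun f => (starMul_comm f starUnit).trans (starUnit_starMul f)
    left_distrib := starMul_add
    right_distrib := fun f g h => (starMul_comm _ h).trans <| (starMul_add h f g).trans <| by
      rw [starMul_comm h f, starMul_comm h g]; rfl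
    zero_mul := fun _ => funext fun _ => sum_eq_zero fun _ _ => zero_mul _
    mul_zero := fun _ => funext fun _ => sum_eq_zero fun _ _ => mul_zero _
    mul_comm := starMul_comm }

theorem mul_apply (f g : FinsetFun α) (ω : Finset α) :
    (f * g) ω = ∑ ζ ∈ ω.powerset, f ζ * g (ω \ ζ) := rfl

theorem one_apply (ω : Finset α) : (1 : FinsetFun α) ω = if ω = ∅ then 1 else 0 := rfl

theorem add_apply (f g : FinsetFun α) (ω : Finset α) : (f + g) ω = f ω + g ω := rfl

theorem sub_apply (f g : FinsetFun α) (ω : Finset α) : (f - g) ω = f ω - g ω := rfl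

theorem smul_apply (r : ℝ) (f : FinsetFun α) (ω : Finset α) : (r • f) ω = r * f ω := rfl

instance : Algebra ℝ (FinsetFun α) :=
  Algebra.ofModule
    (fun r f g => funext fun ω => by simp only [mul_apply, smul_apply, mul_sum, mul_assoc])
    (fun r f g => funext fun ω => by
      simp only [mul_apply, smul_apply, mul_sum, mul_left_comm])

theorem sum_apply {ι : Type*} (s : Finset ι) (f : ι → FinsetFun α) (ω : Finset α) :
    (∑ i ∈ s, f i) ω = ∑ i ∈ s, f i ω := by
  induction s using cons_induction with
  | empty => rfl
  | cons i s hi ih => rw [sum_cons, sum_cons, add_apply, ih]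

theorem starPow_eq_pow (f : FinsetFun α) (n : ℕ) : starPow f n = f ^ n := by
  induction n with
  | zero => rfl
  | succ n ih => rw [pow_succ', ← ih]; rfl

theorem mul_apply_congr {f f' g g' : FinsetFun α} {ω : Finset α} (hf : ∀ ζ ⊆ ω, f ζ = f' ζ)
    (hg : ∀ ζ ⊆ ω, g ζ = g' ζ) : (f * g) ω = (f' * g') ω :=
  sum_congr rfl fun ζ hζ => by
    rw [hf ζ (mem_powerset.mp hζ), hg _ sdiff_subset]

theorem pow_apply_eq_zero {f : FinsetFun α} (hf : f ∅ = 0) :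
    ∀ {n : ℕ} {ω : Finset α}, ω.card < n → (f ^ n) ω = 0
  | 0, _, h => absurd h (Nat.not_lt_zero _)
  | n + 1, ω, h => by
    rw [pow_succ', mul_apply]
    refine sum_eq_zero fun ζ hζ => ?_
    obtain rfl | hne := ζ.eq_empty_or_nonempty
    · rw [hf, zero_mul]
    · have hlt := card_lt_card (sdiff_ssubset (mem_powerset.mp hζ) hne)
      rw [pow_apply_eq_zero hf (by omega), mul_zero]

theorem pow_mul_apply_eq_zero {f : FinsetFun α} (hf : f ∅ = 0) {n : ℕ} {ω : Finset α}
    (h : ω.card < n) (g : FinsetFun α) : (f ^ n * g) ω = 0 :=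
  sum_eq_zero fun ζ hζ => by
    rw [pow_apply_eq_zero hf ((card_le_card (mem_powerset.mp hζ)).trans_lt h), zero_mul]

open Polynomial

def dop (x : α) (f : FinsetFun α) : FinsetFun α := Dop {x} f

theorem dop_apply {x : α} {ω : Finset α} (hx : x ∉ ω) (f : FinsetFun α) :
    dop x f ω = f (insert x ω) := by
  change (if Disjoint ω {x} then f (ω ∪ {x}) else 0) = _
  rw [if_pos (disjoint_singleton_right.mpr hx), union_comm, ← insert_eq]

/-- `dop x` is not a derivation of `FinsetFun α`, but it satisfies the Leibniz rule at every
set avoiding `x`. -/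
theorem mul_apply_insert {x : α} {ω : Finset α} (hx : x ∉ ω) (f g : FinsetFun α) :
    (f * g) (insert x ω) = (f * dop x g) ω + (dop x f * g) ω := by
  rw [mul_apply, sum_powerset_insert hx, mul_apply, mul_apply]
  congr 1 <;> refine sum_congr rfl fun ζ hζ => ?_
  · have hxζ : x ∉ ζ := fun h => hx (mem_powerset.mp hζ h)
    rw [insert_sdiff_of_notMem _ hxζ, dop_apply (fun h => hx (mem_sdiff.mp h).1)]
  · rw [insert_sdiff_insert, sdiff_insert_of_notMem hx,
      dop_apply fun h => hx (mem_powerset.mp hζ h)]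

theorem aeval_apply_insert (f : FinsetFun α) (p : ℝ[X]) {x : α} :
    ∀ {ω : Finset α}, x ∉ ω → aeval f p (insert x ω) = (aeval f (derivative p) * dop x f) ω := by
  have h_mul_X : ∀ q : ℝ[X], (∀ {ω}, x ∉ ω →
      aeval f q (insert x ω) = (aeval f (derivative q) * dop x f) ω) →
      ∀ {ω}, x ∉ ω → aeval f (q * X) (insert x ω) =
        (aeval f (derivative (q * X)) * dop x f) ω := by
    intro q hq ω hx
    have hdop : ∀ ζ ⊆ ω, dop x (aeval f q) ζ = (aeval f (derivative q) * dop x f) ζ :=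
      fun ζ hζ => by rw [dop_apply fun h => hx (hζ h), hq fun h => hx (hζ h)]
    rw [map_mul, aeval_X, mul_apply_insert hx, mul_apply_congr hdop fun _ _ => rfl,
      derivative_mul, derivative_X, mul_one, map_add, map_mul, aeval_X, add_mul, add_apply,
      mul_right_comm, add_comm]
  induction p using Polynomial.induction_on with
  | C a =>
    intro ω hx
    rw [derivative_C, map_zero, zero_mul, aeval_C, Algebra.algebraMap_eq_smul_one, smul_apply,
      one_apply, if_neg (insert_ne_empty x ω), mul_zero]
    rfl
  | add p q hp hq =>
    intro ω hx
    rw [map_add, add_apply, hp hx, hq hx, derivative_add, map_add, add_mul, add_apply]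
  | monomial n a ih =>
    rw [pow_succ, ← mul_assoc]
    exact fun {ω} hx => h_mul_X _ ih hx

end FinsetFun

theorem eq_of_insert_recursion (k : Finset α → ℝ) {F G : Finset α → ℝ} (h₀ : F ∅ = G ∅)
    (hF : ∀ x ω, x ∉ ω → F (insert x ω) = ∑ ζ ∈ ω.powerset, k (insert x ζ) * F (ω \ ζ))
    (hG : ∀ x ω, x ∉ ω → G (insert x ω) = ∑ ζ ∈ ω.powerset, k (insert x ζ) * G (ω \ ζ)) :
    F = G := by
  funext ω
  induction ω using strongInduction with
  | H ω ih =>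
    obtain rfl | ⟨x, hx⟩ := ω.eq_empty_or_nonempty
    · exact h₀
    · rw [← insert_erase hx, hF _ _ (notMem_erase x ω),
        hG _ _ (notMem_erase x ω)]
      exact sum_congr rfl fun ζ _ => by
        rw [ih _ (sdiff_subset.trans_ssubset (erase_ssubset hx))]

section ExpLog

open Polynomial FinsetFun

def expPoly (N : ℕ) : ℝ[X] := ∑ n ∈ range (N + 1), C (n.factorial : ℝ)⁻¹ * X ^ n

def logPoly (N : ℕ) : ℝ[X] := ∑ n ∈ Icc 1 N, C ((-1 : ℝ) ^ (n - 1) / n) * X ^ n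

theorem derivative_expPoly_succ (N : ℕ) : derivative (expPoly (N + 1)) = expPoly N := by
  rw [expPoly, sum_range_succ', map_add, map_sum]
  simp only [pow_zero, mul_one, derivative_C, add_zero, derivative_C_mul_X_pow,
    Nat.add_sub_cancel, expPoly]
  refine sum_congr rfl fun n _ => ?_
  rw [Nat.factorial_succ, Nat.cast_mul, mul_inv, mul_right_comm,
    inv_mul_cancel₀ (Nat.cast_ne_zero.mpr n.succ_ne_zero), one_mul]

theorem derivative_logPoly_mul (N : ℕ) :
    derivative (logPoly N) * (X + 1) = 1 - (-X) ^ N := by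
  have hterm : ∀ n ∈ Icc 1 N,
      derivative (C ((-1 : ℝ) ^ (n - 1) / n) * X ^ n) = (-X) ^ (n - 1) := by
    intro n hn
    have hn0 : (n : ℝ) ≠ 0 := Nat.cast_ne_zero.mpr (by simp at hn; omega)
    rw [derivative_C_mul_X_pow, div_mul_cancel₀ _ hn0, neg_pow (X : ℝ[X]), map_pow, map_neg,
      map_one]
  rw [logPoly, map_sum, sum_congr rfl hterm, ← Ico_add_one_right_eq_Icc, sum_Ico_eq_sum_range]
  simp only [Nat.add_sub_cancel, add_tsub_cancel_left]
  linear_combination -geom_sum_mul (-X : ℝ[X]) N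

theorem aeval_sum_C_mul_X_pow_apply (f : FinsetFun α) (s : Finset ℕ) (c : ℕ → ℝ)
    (ω : Finset α) : aeval f (∑ n ∈ s, C (c n) * X ^ n) ω = ∑ n ∈ s, c n * (f ^ n) ω := by
  rw [map_sum, FinsetFun.sum_apply]
  refine sum_congr rfl fun n _ => ?_
  rw [map_mul, aeval_C, map_pow, aeval_X, ← Algebra.smul_def, FinsetFun.smul_apply]

theorem expStar_eq_aeval {ψ : FinsetFun α} (hψ : ψ ∅ = 0) {N : ℕ} {ω : Finset α}
    (h : ω.card ≤ N) : expStar ψ ω = aeval ψ (expPoly N) ω := by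
  rw [expPoly, aeval_sum_C_mul_X_pow_apply]
  unfold expStar
  simp only [starPow_eq_pow]
  refine sum_subset (range_subset_range.mpr (by omega)) fun n hn hn' => ?_
  rw [pow_apply_eq_zero hψ (by simp at hn'; omega), mul_zero]

theorem expStar_insert {ψ : FinsetFun α} (hψ : ψ ∅ = 0) {x : α} {ω : Finset α} (hx : x ∉ ω) :
    expStar ψ (insert x ω) = ∑ ζ ∈ ω.powerset, ψ (insert x ζ) * expStar ψ (ω \ ζ) := by
  rw [expStar_eq_aeval hψ (card_insert_of_notMem hx).le, aeval_apply_insert ψ _ hx,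
    derivative_expPoly_succ, mul_comm, mul_apply]
  refine sum_congr rfl fun ζ hζ => ?_
  rw [mem_powerset] at hζ
  rw [dop_apply fun h => hx (hζ h), expStar_eq_aeval hψ (card_le_card sdiff_subset)]

theorem lnStar_eq_aeval (F : FinsetFun α) (ω : Finset α) :
    lnStar F ω = aeval (F - 1) (logPoly ω.card) ω := by
  rw [logPoly, aeval_sum_C_mul_X_pow_apply]
  unfold lnStar
  simp only [← starPow_eq_pow]
  rfl

theorem lnStar_expStar {ψ : FinsetFun α} (hψ : ψ ∅ = 0) (ω : Finset α) :
    lnStar (expStar ψ) ω = ψ ω := by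
  obtain rfl | ⟨x, hx⟩ := ω.eq_empty_or_nonempty
  · simp [lnStar, hψ]
  obtain ⟨E, hE⟩ : ∃ E : FinsetFun α, expStar ψ = E := ⟨_, rfl⟩
  have hE_insert : ∀ ζ, x ∉ ζ → E (insert x ζ) = (dop x ψ * E) ζ := fun ζ hxζ => by
    rw [mul_apply, ← hE, expStar_insert hψ hxζ]
    exact sum_congr rfl fun η hη => by rw [dop_apply fun h => hxζ (mem_powerset.mp hη h)]
  have hE_empty : E ∅ = 1 := by simp [← hE, expStar, starPow, starUnit]
  have hdop : ∀ ζ ⊆ ω.erase x, dop x (E - 1) ζ = (dop x ψ * E) ζ := fun ζ hζ => by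
    have hxζ : x ∉ ζ := fun h => notMem_erase x ω (hζ h)
    rw [dop_apply hxζ, FinsetFun.sub_apply, one_apply, if_neg (insert_ne_empty x ζ), sub_zero,
      hE_insert ζ hxζ]
  have hlog : aeval (E - 1) (derivative (logPoly ω.card)) * (dop x ψ * E)
      = dop x ψ - (-(E - 1)) ^ ω.card * dop x ψ := by
    have h := congrArg (aeval (E - 1)) (derivative_logPoly_mul ω.card)
    simp only [map_mul, map_add, map_sub, map_pow, map_neg, map_one, aeval_X] at h
    linear_combination (dop x ψ) * h
  have hy_empty : (-(E - 1)) ∅ = 0 := by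
    change -(E ∅ - 1) = 0
    rw [hE_empty, sub_self, neg_zero]
  rw [hE, lnStar_eq_aeval, ← insert_erase hx, aeval_apply_insert (E - 1) _ (notMem_erase x ω),
    mul_apply_congr (fun _ _ => rfl) hdop, insert_erase hx, hlog, FinsetFun.sub_apply,
    pow_mul_apply_eq_zero hy_empty (card_erase_lt_of_mem hx), sub_zero,
    dop_apply (notMem_erase x ω), insert_erase hx]

end ExpLog

section Graphs

open SimpleGraph

theorem SimpleGraph.Reachable.propagate {V : Type*} {G : SimpleGraph V} {P : V → Prop} {u v : V}
    (h : G.Reachable u v) (hu : P u) (hP : ∀ a b, G.Adj a b → P a → P b) : P v := by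
  rw [reachable_iff_reflTransGen] at h
  induction h with
  | refl => exact hu
  | tail _ hab ih => exact hP _ _ hab ih

theorem mem_graphsOn {ω : Finset α} {G : Finset (Sym2 α)} :
    G ∈ graphsOn ω ↔ G ⊆ ω.sym2 ∧ ∀ e ∈ G, ¬ e.IsDiag := by
  rw [graphsOn, mem_filter, mem_powerset]

theorem toGraph_connected_iff {V : Type*} {ω : Finset V} {G : Finset (Sym2 V)}
    (hG : G ⊆ ω.sym2) {x : V} (hx : x ∈ ω) :
    (toGraph ω G).Connected ↔ ∀ y ∈ ω, (fromEdgeSet (G : Set (Sym2 V))).Reachable x y := by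
  have toGraph_adj : ∀ a b : {y // y ∈ ω}, (toGraph ω G).Adj a b ↔ s(a.1, b.1) ∈ G ∧ a ≠ b :=
    fun a b => by rw [toGraph, fromEdgeSet_adj, Set.mem_ofPred_eq, Sym2.map_mk]
  constructor
  · intro h y hy
    let val : toGraph ω G →g fromEdgeSet (G : Set (Sym2 V)) :=
      ⟨Subtype.val, fun hab => by
        obtain ⟨he, hne⟩ := (toGraph_adj _ _).mp hab
        exact (fromEdgeSet_adj _).mpr ⟨he, fun h => hne (Subtype.ext h)⟩⟩
    exact (h.preconnected ⟨x, hx⟩ ⟨y, hy⟩).map val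
  · intro h
    have hreach : ∀ y (hy : y ∈ ω), (toGraph ω G).Reachable ⟨x, hx⟩ ⟨y, hy⟩ := fun y hy =>
      (h y hy).propagate (P := fun v => ∀ hv : v ∈ ω, (toGraph ω G).Reachable ⟨x, hx⟩ ⟨v, hv⟩)
        (fun _ => Reachable.refl _) (fun a b hab ha hb => by
          obtain ⟨he, hne⟩ := (fromEdgeSet_adj _).mp hab
          have ha' := (mk_mem_sym2_iff.mp (hG he)).1
          exact (ha ha').trans ((toGraph_adj ⟨a, ha'⟩ ⟨b, hb⟩).mpr
            ⟨he, fun h => hne (congrArg Subtype.val h)⟩).reachable) hy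
    have : Nonempty {y // y ∈ ω} := ⟨⟨x, hx⟩⟩
    exact ⟨fun u v => (hreach u u.2).symm.trans (hreach v v.2)⟩

open Classical in
def reachableIn {V : Type*} (G : Finset (Sym2 V)) (x : V) (s : Finset V) : Finset V :=
  s.filter ((fromEdgeSet (G : Set (Sym2 V))).Reachable x)

theorem mem_reachableIn {V : Type*} {G : Finset (Sym2 V)} {x y : V} {s : Finset V} :
    y ∈ reachableIn G x s ↔ y ∈ s ∧ (fromEdgeSet (G : Set (Sym2 V))).Reachable x y := by
  classical
  rw [reachableIn, mem_filter]

theorem reachableIn_insert (G : Finset (Sym2 α)) (x : α) (ω : Finset α) :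
    reachableIn G x (insert x ω) = insert x (reachableIn G x ω) := by
  ext y
  simp only [mem_reachableIn, mem_insert]
  constructor
  · rintro ⟨rfl | hy, h⟩
    exacts [Or.inl rfl, Or.inr ⟨hy, h⟩]
  · rintro (rfl | ⟨hy, h⟩)
    exacts [⟨Or.inl rfl, Reachable.refl _⟩, ⟨Or.inr hy, h⟩]

theorem mem_sym2_reachableIn_or {s : Finset α} {G : Finset (Sym2 α)} (hG : G ⊆ s.sym2)
    (x : α) {e : Sym2 α} (he : e ∈ G) :
    e ∈ (reachableIn G x s).sym2 ∨ e ∈ (s \ reachableIn G x s).sym2 := by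
  induction e using Sym2.ind with
  | _ a b =>
    have hab := mk_mem_sym2_iff.mp (hG he)
    have hiff : (fromEdgeSet (G : Set (Sym2 α))).Reachable x a ↔
        (fromEdgeSet (G : Set (Sym2 α))).Reachable x b := by
      obtain rfl | hne := eq_or_ne a b
      · rfl
      · have hadj : (fromEdgeSet (G : Set (Sym2 α))).Adj a b := (fromEdgeSet_adj _).mpr ⟨he, hne⟩
        exact ⟨fun h => h.trans hadj.reachable, fun h => h.trans hadj.symm.reachable⟩
    simp only [mk_mem_sym2_iff, mem_sdiff, mem_reachableIn]
    tauto

theorem reachable_filter_mem_sym2_reachableIn {s : Finset α} {G : Finset (Sym2 α)}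
    (hG : G ⊆ s.sym2) {x y : α} (hy : y ∈ reachableIn G x s) :
    (fromEdgeSet ↑(G.filter (· ∈ (reachableIn G x s).sym2))).Reachable x y := by
  refine (mem_reachableIn.mp hy).2.propagate (Reachable.refl _) fun a b hab ha => ?_
  obtain ⟨he, hne⟩ := (fromEdgeSet_adj _).mp hab
  have hxa : (fromEdgeSet (G : Set (Sym2 α))).Reachable x a :=
    ha.mono (fromEdgeSet_mono (coe_subset.mpr (filter_subset _ _)))
  have hs := mk_mem_sym2_iff.mp (hG he)
  have hT : s(a, b) ∈ (reachableIn G x s).sym2 := mk_mem_sym2_iff.mpr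
    ⟨mem_reachableIn.mpr ⟨hs.1, hxa⟩, mem_reachableIn.mpr ⟨hs.2, hxa.trans hab.reachable⟩⟩
  exact ha.trans
    ((fromEdgeSet_adj _).mpr ⟨mem_coe.mpr (mem_filter.mpr ⟨mem_coe.mp he, hT⟩), hne⟩).reachable

theorem reachable_union_iff {T U : Finset α} {C H : Finset (Sym2 α)} (hC : C ⊆ T.sym2)
    (hH : H ⊆ U.sym2) (hTU : Disjoint T U) {x : α}
    (hconn : ∀ y ∈ T, (fromEdgeSet (C : Set (Sym2 α))).Reachable x y) (hx : x ∈ T) (v : α) :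
    (fromEdgeSet ↑(C ∪ H)).Reachable x v ↔ v ∈ T := by
  refine ⟨fun h => h.propagate hx fun a b hab ha => ?_,
    fun hv => (hconn v hv).mono (fromEdgeSet_mono (by simp))⟩
  obtain ⟨he, -⟩ := (fromEdgeSet_adj _).mp hab
  rcases mem_union.mp (mem_coe.mp he) with hCe | hHe
  · exact (mk_mem_sym2_iff.mp (hC hCe)).2
  · exact absurd (mk_mem_sym2_iff.mp (hH hHe)).1 (disjoint_left.mp hTU ha)

open Classical in
def connectedGraphsOn (ω : Finset α) : Finset (Finset (Sym2 α)) :=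
  (graphsOn ω).filter fun G => (toGraph ω G).Connected

theorem mem_connectedGraphsOn {ω : Finset α} {G : Finset (Sym2 α)} :
    G ∈ connectedGraphsOn ω ↔ G ∈ graphsOn ω ∧ (toGraph ω G).Connected := by
  classical
  rw [connectedGraphsOn, mem_filter]

theorem graphsOn_mono {ω ω' : Finset α} (h : ω ⊆ ω') {G : Finset (Sym2 α)}
    (hG : G ∈ graphsOn ω) : G ∈ graphsOn ω' := by
  rw [mem_graphsOn] at hG ⊢
  exact ⟨hG.1.trans (sym2_mono h), hG.2⟩

theorem union_mem_graphsOn {ω : Finset α} {G H : Finset (Sym2 α)} (hG : G ∈ graphsOn ω)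
    (hH : H ∈ graphsOn ω) : G ∪ H ∈ graphsOn ω := by
  rw [mem_graphsOn] at hG hH ⊢
  exact ⟨union_subset hG.1 hH.1, fun e he => (mem_union.mp he).elim (hG.2 e) (hH.2 e)⟩

theorem notMem_sym2_of_disjoint {V : Type*} {T U : Finset V} (h : Disjoint T U) {e : Sym2 V}
    (he : e ∈ U.sym2) : e ∉ T.sym2 := by
  induction e using Sym2.ind with
  | _ a b => exact fun h' => disjoint_left.mp h (mk_mem_sym2_iff.mp h').1 (mk_mem_sym2_iff.mp he).1

theorem filter_mem_connectedGraphsOn_reachableIn {s : Finset α} {G : Finset (Sym2 α)}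
    (hG : G ∈ graphsOn s) {x : α} (hx : x ∈ s) :
    G.filter (· ∈ (reachableIn G x s).sym2) ∈ connectedGraphsOn (reachableIn G x s) := by
  obtain ⟨hGs, hGd⟩ := mem_graphsOn.mp hG
  have hC : G.filter (· ∈ (reachableIn G x s).sym2) ⊆ (reachableIn G x s).sym2 :=
    fun e he => (mem_filter.mp he).2
  refine mem_connectedGraphsOn.mpr
    ⟨mem_graphsOn.mpr ⟨hC, fun e he => hGd e (mem_filter.mp he).1⟩, ?_⟩
  rw [toGraph_connected_iff hC (mem_reachableIn.mpr ⟨hx, Reachable.refl _⟩)]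
  exact fun y hy => reachable_filter_mem_sym2_reachableIn hGs hy

theorem filter_notMem_mem_graphsOn_sdiff_reachableIn {s : Finset α} {G : Finset (Sym2 α)}
    (hG : G ∈ graphsOn s) (x : α) :
    G.filter (· ∉ (reachableIn G x s).sym2) ∈ graphsOn (s \ reachableIn G x s) := by
  obtain ⟨hGs, hGd⟩ := mem_graphsOn.mp hG
  refine mem_graphsOn.mpr ⟨fun e he => ?_, fun e he => hGd e (mem_filter.mp he).1⟩
  obtain ⟨he, hne⟩ := mem_filter.mp he
  exact (mem_sym2_reachableIn_or hGs x he).resolve_left hne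

/-- The graphs on `insert x ω` whose component of `x` is `insert x ζ` are exactly the unions of
a connected graph on `insert x ζ` and an arbitrary graph on `ω \ ζ`. -/
theorem sum_graphsOn_reachableIn_eq {R : Type*} [CommSemiring R] (f : Sym2 α → R) {x : α}
    {ω ζ : Finset α} (hx : x ∉ ω) (hζ : ζ ⊆ ω) :
    ∑ G ∈ (graphsOn (insert x ω)).filter (reachableIn · x ω = ζ), ∏ e ∈ G, f e =
      (∑ C ∈ connectedGraphsOn (insert x ζ), ∏ e ∈ C, f e) *
        ∑ H ∈ graphsOn (ω \ ζ), ∏ e ∈ H, f e := by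
  have hsdiff : insert x ω \ insert x ζ = ω \ ζ := by
    rw [insert_sdiff_insert, sdiff_insert_of_notMem hx]
  have hdisj : Disjoint (insert x ζ) (ω \ ζ) := by
    rw [disjoint_insert_left]
    exact ⟨fun h => hx (mem_sdiff.mp h).1, sdiff_disjoint.symm⟩
  rw [sum_mul_sum, ← sum_product']
  refine sum_nbij' (fun G => (G.filter (· ∈ (insert x ζ).sym2), G.filter (· ∉ (insert x ζ).sym2)))
    (fun p => p.1 ∪ p.2) ?_ ?_ ?_ ?_ ?_
  · intro G hG
    obtain ⟨hG, hGζ⟩ := mem_filter.mp hG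
    rw [← hGζ, ← reachableIn_insert] at hsdiff ⊢
    rw [← hsdiff]
    exact mem_product.mpr ⟨filter_mem_connectedGraphsOn_reachableIn hG (mem_insert_self x ω),
      filter_notMem_mem_graphsOn_sdiff_reachableIn hG x⟩
  · rintro ⟨C, H⟩ hCH
    obtain ⟨hC, hH⟩ := mem_product.mp hCH
    obtain ⟨hCg, hconn⟩ := mem_connectedGraphsOn.mp hC
    have hCs := (mem_graphsOn.mp hCg).1
    rw [toGraph_connected_iff hCs (mem_insert_self x ζ)] at hconn
    refine mem_filter.mpr ⟨union_mem_graphsOn (graphsOn_mono (insert_subset_insert x hζ) hCg)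
      (graphsOn_mono (sdiff_subset.trans (subset_insert x ω)) hH), ?_⟩
    ext y
    rw [mem_reachableIn, reachable_union_iff hCs (mem_graphsOn.mp hH).1 hdisj hconn
      (mem_insert_self x ζ), mem_insert]
    exact ⟨fun ⟨hy, h⟩ => h.resolve_left (ne_of_mem_of_not_mem hy hx), fun h => ⟨hζ h, Or.inr h⟩⟩
  · intro G _
    exact filter_union_filter_not_eq _ G
  · rintro ⟨C, H⟩ hCH
    obtain ⟨hC, hH⟩ := mem_product.mp hCH
    have hCs := (mem_graphsOn.mp (mem_connectedGraphsOn.mp hC).1).1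
    have hHs : ∀ e ∈ H, e ∉ (insert x ζ).sym2 := fun e he =>
      notMem_sym2_of_disjoint hdisj ((mem_graphsOn.mp hH).1 he)
    rw [filter_union, filter_union, filter_true_of_mem hCs, filter_false_of_mem hHs,
      filter_false_of_mem fun e he h => h (hCs he), filter_true_of_mem hHs, union_empty,
      empty_union]
  · intro G _
    exact (prod_filter_mul_prod_filter_not G _ f).symm

theorem sum_graphsOn_insert {R : Type*} [CommSemiring R] (f : Sym2 α → R) {x : α}
    {ω : Finset α} (hx : x ∉ ω) :
    ∑ G ∈ graphsOn (insert x ω), ∏ e ∈ G, f e = ∑ ζ ∈ ω.powerset,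
      (∑ C ∈ connectedGraphsOn (insert x ζ), ∏ e ∈ C, f e) *
        ∑ H ∈ graphsOn (ω \ ζ), ∏ e ∈ H, f e := by
  rw [← sum_fiberwise_of_maps_to (g := (reachableIn · x ω))
    fun G _ => mem_powerset.mpr fun y hy => (mem_reachableIn.mp hy).1]
  exact sum_congr rfl fun ζ hζ => sum_graphsOn_reachableIn_eq f hx (mem_powerset.mp hζ)

def mayerF {V : Type*} (β : ℝ) (φ : V → V → ℝ) (hφ : ∀ x y, φ x y = φ y x) (e : Sym2 V) : ℝ :=
  Real.exp (-β * Sym2.lift ⟨φ, hφ⟩ e) - 1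

theorem gibbs_eq_sum_graphsOn (β : ℝ) (φ : α → α → ℝ) (hφ : ∀ x y, φ x y = φ y x)
    (ω : Finset α) : gibbs β φ hφ ω = ∑ G ∈ graphsOn ω, ∏ e ∈ G, mayerF β φ hφ e := by
  have hgraphs : graphsOn ω = (ω.sym2.filter fun e => ¬ e.IsDiag).powerset := by
    ext G
    simp only [mem_graphsOn, mem_powerset, subset_iff, mem_filter]
    exact ⟨fun h e he => ⟨h.1 he, h.2 e he⟩, fun h => ⟨fun e he => (h he).1, fun e he => (h he).2⟩⟩
  rw [hgraphs, ← prod_add_one, gibbs, energy, mul_sum, Real.exp_sum]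
  simp only [mayerF, sub_add_cancel]

theorem ursell_eq_sum_connectedGraphsOn (β : ℝ) (φ : α → α → ℝ) (hφ : ∀ x y, φ x y = φ y x)
    (ω : Finset α) : ursell β φ hφ ω = ∑ G ∈ connectedGraphsOn ω, ∏ e ∈ G, mayerF β φ hφ e :=
  rfl

theorem ursell_empty (β : ℝ) (φ : α → α → ℝ) (hφ : ∀ x y, φ x y = φ y x) :
    ursell β φ hφ ∅ = 0 := by
  refine sum_eq_zero fun G hG => ?_
  obtain ⟨⟨v, hv⟩⟩ := (mem_connectedGraphsOn.mp hG).2.nonempty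
  exact absurd hv (notMem_empty v)

theorem gibbs_insert (β : ℝ) (φ : α → α → ℝ) (hφ : ∀ x y, φ x y = φ y x) {x : α}
    {ω : Finset α} (hx : x ∉ ω) :
    gibbs β φ hφ (insert x ω) =
      ∑ ζ ∈ ω.powerset, ursell β φ hφ (insert x ζ) * gibbs β φ hφ (ω \ ζ) := by
  simp only [gibbs_eq_sum_graphsOn, ursell_eq_sum_connectedGraphsOn]
  exact sum_graphsOn_insert _ hx

end Graphs

theorem ursell_representation_general (β : ℝ) (φ : α → α → ℝ)
    (hφ : ∀ x y, φ x y = φ y x) :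
    (∀ ω : Finset α, ω ≠ ∅ → lnStar (gibbs β φ hφ) ω = ursell β φ hφ ω) ∧
    lnStar (gibbs β φ hφ) ∅ = 0 ∧ ursell β φ hφ ∅ = 0 ∧
    (∀ ω : Finset α, expStar (ursell β φ hφ) ω = gibbs β φ hφ ω) := by
  have hk : ursell β φ hφ ∅ = 0 := ursell_empty β φ hφ
  have hexp : expStar (ursell β φ hφ) = gibbs β φ hφ :=
    eq_of_insert_recursion (ursell β φ hφ) (by simp [expStar, starPow, starUnit, gibbs, energy])
      (fun _ _ hx => expStar_insert hk hx) (fun _ _ hx => gibbs_insert β φ hφ hx)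
  have hln : ∀ ω, lnStar (gibbs β φ hφ) ω = ursell β φ hφ ω := fun ω =>
    hexp ▸ lnStar_expStar hk ω
  exact ⟨fun ω _ => hln ω, (hln ∅).trans hk, hk, congrFun hexp⟩

/-- The Ursell function `k := ln*(e^{−βE})` has the representation
`k(ω) = Σ_{G connected graph on ω} ∏_{{x,y} ∈ G} (e^{−βφ(x,y)} − 1)` for nonempty `ω`, and
`k(∅) = 0`.  Equivalently, `exp* k = e^{−βE}`. -/
theorem ursell_representation (β : ℝ) (hβ : 0 < β) (φ : α → α → ℝ)
    (hφ : ∀ x y, φ x y = φ y x) :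
    (∀ ω : Finset α, ω ≠ ∅ → lnStar (gibbs β φ hφ) ω = ursell β φ hφ ω) ∧
    lnStar (gibbs β φ hφ) ∅ = 0 ∧ ursell β φ hφ ∅ = 0 ∧
    (∀ ω : Finset α, expStar (ursell β φ hφ) ω = gibbs β φ hφ ω) :=
  ursell_representation_general β φ hφ

end
end

section
/- The function k̄ satisfies the recursion: for all disjoint finite sets ω, ζ ⊆ α with ω ≠ ∅ and every x₀ ∈ ω, k̄(ω, ζ) = e^{−β·W({x₀}, ω \ {x₀})} · Σ_{ω' ⊆ ζ} (∏_{x ∈ ω'} (e^{−βφ(x₀,x)} − 1)) · k̄((ω \ {x₀}) ∪ ω', ζ \ ω'), together with the initial condition k̄(∅, ζ) = 1 if ζ = ∅ and 0 otherwise. -/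
open Finset

noncomputable section

variable {α : Type*} [DecidableEq α]

namespace KR
section Alg
variable {α : Type*} [DecidableEq α]

lemma sum_powerset_sdiff' (t : Finset α) (F : Finset α → ℝ) :
    ∑ A ∈ t.powerset, F A = ∑ A ∈ t.powerset, F (t \ A) := by
  apply Finset.sum_bij' (fun A _ => t \ A) (fun A _ => t \ A)
  · intro a ha; simp
  · intro a ha; simp
  · intro a ha; simp only [mem_powerset] at ha
    exact Finset.sdiff_sdiff_eq_self ha
  · intro a ha; simp only [mem_powerset] at ha
    exact Finset.sdiff_sdiff_eq_self ha
  · intro a ha; simp only [mem_powerset] at ha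
    rw [Finset.sdiff_sdiff_eq_self ha]

lemma powerset_sdiff_eq_filter (ζ A : Finset α) :
    (ζ \ A).powerset = ζ.powerset.filter (fun B => Disjoint A B) := by
  ext B; simp [Finset.subset_sdiff, disjoint_comm, and_comm]

lemma sum_comm_disjoint (ζ : Finset α) (F : Finset α → Finset α → ℝ) :
    ∑ A ∈ ζ.powerset, ∑ B ∈ (ζ \ A).powerset, F A B
      = ∑ B ∈ ζ.powerset, ∑ A ∈ (ζ \ B).powerset, F A B := by
  have h1 : ∀ A, ∑ B ∈ (ζ \ A).powerset, F A B
      = ∑ B ∈ ζ.powerset, if Disjoint A B then F A B else 0 := by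
    intro A; rw [powerset_sdiff_eq_filter, Finset.sum_filter]
  have h2 : ∀ B, ∑ A ∈ (ζ \ B).powerset, F A B
      = ∑ A ∈ ζ.powerset, if Disjoint B A then F A B else 0 := by
    intro B; rw [powerset_sdiff_eq_filter, Finset.sum_filter]
  simp only [h1, h2]
  rw [Finset.sum_comm]
  apply Finset.sum_congr rfl; intro B _; apply Finset.sum_congr rfl; intro A _
  congr 1
  exact propext disjoint_comm

lemma swap2 (ζ : Finset α) (F : Finset α → Finset α → ℝ) :
    ∑ B ∈ ζ.powerset, ∑ A ∈ B.powerset, F A (B \ A)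
      = ∑ A ∈ ζ.powerset, ∑ C ∈ (ζ \ A).powerset, F A C := by
  rw [sum_powerset_sdiff' ζ (fun B => ∑ A ∈ B.powerset, F A (B \ A))]
  have h : ∀ B' ∈ ζ.powerset, ∑ A ∈ (ζ \ B').powerset, F A ((ζ \ B') \ A)
      = ∑ A ∈ (ζ \ B').powerset, F A ((ζ \ A) \ B') := by
    intro B' _; apply Finset.sum_congr rfl; intro A _; rw [sdiff_sdiff_comm]
  rw [Finset.sum_congr rfl h, sum_comm_disjoint ζ (fun B' A => F A ((ζ \ A) \ B'))]
  apply Finset.sum_congr rfl; intro A _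
  rw [← sum_powerset_sdiff' (ζ \ A) (fun C => F A C)]

lemma starPow_vanish {ψ : Finset α → ℝ} (hψ : ψ ∅ = 0) :
    ∀ (n : ℕ) (ζ : Finset α), ζ.card < n → starPow ψ n ζ = 0 := by
  intro n
  induction n with
  | zero => intro ζ h; omega
  | succ n ih =>
    intro ζ h
    show starMul ψ (starPow ψ n) ζ = 0
    apply Finset.sum_eq_zero
    intro S hS
    simp only [mem_powerset] at hS
    rcases S.eq_empty_or_nonempty with rfl | hne
    · simp [hψ]
    · have h1 : 1 ≤ S.card := Finset.card_pos.2 hne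
      have h2 : S.card ≤ ζ.card := Finset.card_le_card hS
      have h3 : (ζ \ S).card = ζ.card - S.card := Finset.card_sdiff_of_subset hS
      have : (ζ \ S).card < n := by omega
      rw [ih _ this, mul_zero]

lemma expStar_empty (ψ : Finset α → ℝ) : expStar ψ (∅ : Finset α) = 1 := by
  simp [expStar, starPow, starUnit]

lemma starMul_apply (ψ₁ ψ₂ : Finset α → ℝ) (ζ : Finset α) :
    starMul ψ₁ ψ₂ ζ = ∑ S ∈ ζ.powerset, ψ₁ S * ψ₂ (ζ \ S) := rfl

lemma starPow_deriv {ψ : Finset α → ℝ} (hψ : ψ ∅ = 0) {x : α} :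
    ∀ (n : ℕ) {ζ : Finset α}, x ∈ ζ →
      starPow ψ (n+1) ζ
        = (n+1 : ℝ) * ∑ S ∈ ζ.powerset,
            (if x ∈ S then ψ S * starPow ψ n (ζ \ S) else 0) := by
  intro n
  induction n with
  | zero =>
    intro ζ hx
    rw [show starPow ψ 1 = starMul ψ (starPow ψ 0) from rfl, starMul_apply]
    rw [show ((0:ℕ)+1 : ℝ) = 1 by norm_num, one_mul]
    apply Finset.sum_congr rfl
    intro S hS
    simp only [mem_powerset] at hS
    by_cases hxS : x ∈ S
    · rw [if_pos hxS]
    · rw [if_neg hxS]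
      have : ζ \ S ≠ ∅ := fun h => by
        have := Finset.mem_sdiff.2 ⟨hx, hxS⟩
        rw [h] at this; exact absurd this (Finset.notMem_empty x)
      show ψ S * starUnit (ζ \ S) = 0
      simp [starUnit, this]
  | succ n ih =>
    intro ζ hx
    rw [show starPow ψ (n+2) = starMul ψ (starPow ψ (n+1)) from rfl, starMul_apply]
    have split : ∀ S₁ ∈ ζ.powerset, ψ S₁ * starPow ψ (n+1) (ζ \ S₁)
        = (if x ∈ S₁ then ψ S₁ * starPow ψ (n+1) (ζ \ S₁) else 0)
          + (n+1 : ℝ) * ∑ S ∈ (ζ \ S₁).powerset,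
              (if x ∈ S then ψ S₁ * (ψ S * starPow ψ n ((ζ \ S₁) \ S)) else 0) := by
      intro S₁ hS₁
      simp only [mem_powerset] at hS₁
      by_cases hxS₁ : x ∈ S₁
      · rw [if_pos hxS₁]
        have hz : ∑ S ∈ (ζ \ S₁).powerset,
            (if x ∈ S then ψ S₁ * (ψ S * starPow ψ n ((ζ \ S₁) \ S)) else 0) = 0 := by
          apply Finset.sum_eq_zero
          intro S hS
          simp only [mem_powerset] at hS
          by_cases hxS : x ∈ S
          · exact absurd (Finset.mem_sdiff.1 (hS hxS)).2 (by simp [hxS₁])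
          · rw [if_neg hxS]
        rw [hz, mul_zero, add_zero]
      · rw [if_neg hxS₁, zero_add]
        have hx' : x ∈ ζ \ S₁ := Finset.mem_sdiff.2 ⟨hx, hxS₁⟩
        rw [ih hx', Finset.mul_sum, Finset.mul_sum, Finset.mul_sum]
        apply Finset.sum_congr rfl
        intro S _
        by_cases hxS : x ∈ S
        · rw [if_pos hxS, if_pos hxS]; ring
        · rw [if_neg hxS, if_neg hxS]; ring
    rw [Finset.sum_congr rfl split, Finset.sum_add_distrib, ← Finset.mul_sum]
    rw [sum_comm_disjoint ζ (fun S₁ S =>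
      (if x ∈ S then ψ S₁ * (ψ S * starPow ψ n ((ζ \ S₁) \ S)) else 0))]
    have collapse : ∀ S ∈ ζ.powerset,
        ∑ S₁ ∈ (ζ \ S).powerset,
            (if x ∈ S then ψ S₁ * (ψ S * starPow ψ n ((ζ \ S₁) \ S)) else 0)
          = (if x ∈ S then ψ S * starPow ψ (n+1) (ζ \ S) else 0) := by
      intro S _
      by_cases hxS : x ∈ S
      · simp only [if_pos hxS]
        rw [show starPow ψ (n+1) (ζ \ S) = starMul ψ (starPow ψ n) (ζ \ S) from rfl,
          starMul_apply, Finset.mul_sum]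
        apply Finset.sum_congr rfl
        intro S₁ _
        rw [sdiff_sdiff_comm]
        ring
      · simp only [if_neg hxS]
        exact Finset.sum_eq_zero fun _ _ => rfl
    rw [Finset.sum_congr rfl collapse]
    push_cast
    ring

lemma expStar_deriv {ψ : Finset α → ℝ} (hψ : ψ ∅ = 0) {x : α} {ζ : Finset α} (hx : x ∈ ζ) :
    expStar ψ ζ = ∑ S ∈ ζ.powerset,
      (if x ∈ S then ψ S * expStar ψ (ζ \ S) else 0) := by
  have hζ : ζ ≠ ∅ := Finset.ne_empty_of_mem hx
  have hc : 1 ≤ ζ.card := Finset.card_pos.2 ⟨x, hx⟩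
  rw [expStar]
  rw [Finset.sum_range_succ']
  have h0 : ((Nat.factorial 0 : ℕ) : ℝ)⁻¹ * starPow ψ 0 ζ = 0 := by
    simp [starPow, starUnit, hζ]
  rw [h0, add_zero]
  have hterm : ∀ n, ((Nat.factorial (n+1) : ℕ) : ℝ)⁻¹ * starPow ψ (n+1) ζ
      = ∑ S ∈ ζ.powerset,
          (if x ∈ S then ψ S * (((Nat.factorial n : ℕ) : ℝ)⁻¹ * starPow ψ n (ζ \ S)) else 0) := by
    intro n
    rw [starPow_deriv hψ n hx, Nat.factorial_succ]
    push_cast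
    rw [← mul_assoc]
    have heq : ((n : ℝ) + 1)⁻¹ * ((Nat.factorial n : ℝ))⁻¹ * ((n : ℝ) + 1)
        = ((Nat.factorial n : ℝ))⁻¹ := by
      field_simp
    rw [mul_inv, heq, Finset.mul_sum]
    apply Finset.sum_congr rfl
    intro S _
    by_cases hxS : x ∈ S
    · rw [if_pos hxS, if_pos hxS]; ring
    · rw [if_neg hxS, if_neg hxS]; ring
  rw [Finset.sum_congr rfl (fun n _ => hterm n)]
  rw [Finset.sum_comm]
  apply Finset.sum_congr rfl
  intro S hS
  simp only [mem_powerset] at hS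
  by_cases hxS : x ∈ S
  · simp only [if_pos hxS]
    rw [← Finset.mul_sum]
    congr 1
    rw [expStar]
    have hsub : Finset.range ((ζ \ S).card + 1) ⊆ Finset.range (ζ.card) := by
      apply Finset.range_subset_range.2
      have h1 : 1 ≤ S.card := Finset.card_pos.2 ⟨x, hxS⟩
      have h2 : S.card ≤ ζ.card := Finset.card_le_card hS
      have h3 : (ζ \ S).card = ζ.card - S.card := Finset.card_sdiff_of_subset hS
      omega
    rw [Finset.sum_subset hsub]
    intro n _ hn
    simp only [Finset.mem_range, not_lt] at hn
    rw [starPow_vanish hψ n (ζ \ S) (by omega), mul_zero]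
  · simp [hxS]

end Alg

section Graph
variable {α : Type*} [DecidableEq α]

lemma mem_graphsOn {ω : Finset α} {G : Finset (Sym2 α)} :
    G ∈ graphsOn ω ↔ G ⊆ ω.sym2 ∧ ∀ e ∈ G, ¬ e.IsDiag := by
  simp [graphsOn]

lemma graphsOn_eq (ω : Finset α) :
    graphsOn ω = (ω.sym2.filter (fun e => ¬ e.IsDiag)).powerset := by
  ext G
  simp only [mem_graphsOn, mem_powerset, Finset.subset_iff, Finset.mem_filter]
  constructor
  · rintro ⟨h1, h2⟩ e he; exact ⟨h1 he, h2 e he⟩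
  · intro h; exact ⟨fun e he => (h he).1, fun e he => (h he).2⟩

lemma gibbs_eq_sum (β : ℝ) (φ : α → α → ℝ) (hφ : ∀ x y, φ x y = φ y x) (ω : Finset α) :
    gibbs β φ hφ ω = ∑ G ∈ graphsOn ω,
      ∏ e ∈ G, (Real.exp (-β * Sym2.lift ⟨φ, hφ⟩ e) - 1) := by
  rw [gibbs, energy, Finset.mul_sum, Real.exp_sum]
  have h : ∀ e ∈ ω.sym2.filter (fun e => ¬ e.IsDiag),
      Real.exp (-β * Sym2.lift ⟨φ, hφ⟩ e)
        = (Real.exp (-β * Sym2.lift ⟨φ, hφ⟩ e) - 1) + 1 := by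
    intro e _; ring
  rw [Finset.prod_congr rfl h, Finset.prod_add, graphsOn_eq]
  apply Finset.sum_congr rfl
  intro G _
  simp

lemma gibbs_empty (β : ℝ) (φ : α → α → ℝ) (hφ : ∀ x y, φ x y = φ y x) :
    gibbs β φ hφ (∅ : Finset α) = 1 := by
  simp [gibbs, energy]

lemma ursell_empty (β : ℝ) (φ : α → α → ℝ) (hφ : ∀ x y, φ x y = φ y x) :
    ursell β φ hφ (∅ : Finset α) = 0 := by
  rw [ursell]
  apply Finset.sum_eq_zero
  intro G hG
  simp only [Finset.mem_filter] at hG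
  rcases hG.2.nonempty with ⟨⟨y, hy⟩⟩
  simp at hy

end Graph

noncomputable section Comp
open Classical
variable {α : Type*} [DecidableEq α]

lemma walk_closed {V : Type*} {H : SimpleGraph V} {K : Set V}
    (hK : ∀ a b, H.Adj a b → a ∈ K → b ∈ K) :
    ∀ {a b : V}, H.Walk a b → a ∈ K → b ∈ K := by
  intro a b p
  induction p with
  | nil => exact id
  | cons h p ih => intro ha; exact ih (hK _ _ h ha)

/-- The connected component of `x` in the graph on `α` with edge set `G`. -/
def compFin (x : α) (ζ : Finset α) (G : Finset (Sym2 α)) : Finset α :=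
  ζ.filter fun y => (SimpleGraph.fromEdgeSet (G : Set (Sym2 α))).Reachable x y

lemma mem_compFin {x y : α} {ζ : Finset α} {G : Finset (Sym2 α)} :
    y ∈ compFin x ζ G ↔ y ∈ ζ ∧
      (SimpleGraph.fromEdgeSet (G : Set (Sym2 α))).Reachable x y := by
  simp [compFin]

lemma comp_adj_closed {x : α} {ζ : Finset α} {G : Finset (Sym2 α)}
    (hG : G ∈ graphsOn ζ) {a b : α}
    (h : (SimpleGraph.fromEdgeSet (G : Set (Sym2 α))).Adj a b)
    (ha : a ∈ compFin x ζ G) : b ∈ compFin x ζ G := by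
  have hmem : s(a, b) ∈ G := ((SimpleGraph.fromEdgeSet_adj _).1 h).1
  have hb : b ∈ ζ := by
    have h2 := (mem_graphsOn.1 hG).1 hmem
    rw [Finset.mem_sym2_iff] at h2
    exact h2 b (Sym2.mem_mk_right a b)
  rw [mem_compFin] at ha ⊢
  exact ⟨hb, ha.2.trans h.reachable⟩

lemma walk_to_reach_up {S : Finset α} {G' : Finset (Sym2 α)} {H : SimpleGraph α}
    (hclosed : ∀ a b, H.Adj a b → a ∈ S → b ∈ S)
    (hedge : ∀ a b, H.Adj a b → a ∈ S → s(a, b) ∈ G') :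
    ∀ {a b : α} (_ : H.Walk a b) (ha : a ∈ S) (hb : b ∈ S),
      (toGraph S G').Reachable ⟨a, ha⟩ ⟨b, hb⟩ := by
  intro a b p
  induction p with
  | nil => intro ha hb; exact SimpleGraph.Reachable.refl _
  | cons h p ih =>
    intro ha hb
    have hc := hclosed _ _ h ha
    have hadj : (toGraph S G').Adj ⟨_, ha⟩ ⟨_, hc⟩ := by
      rw [toGraph, SimpleGraph.fromEdgeSet_adj]
      constructor
      · show s((⟨_, ha⟩ : {y // y ∈ S}), ⟨_, hc⟩) ∈ {e | Sym2.map Subtype.val e ∈ G'}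
        simp only [Set.mem_setOf_eq, Sym2.map_pair_eq]
        exact hedge _ _ h ha
      · intro hEq; exact h.ne (congrArg Subtype.val hEq)
    exact hadj.reachable.trans (ih hc hb)

lemma walk_down {S : Finset α} {G' E : Finset (Sym2 α)} (hsub : G' ⊆ E) :
    ∀ {u v : {y // y ∈ S}}, (toGraph S G').Walk u v →
      (SimpleGraph.fromEdgeSet (E : Set (Sym2 α))).Reachable u.val v.val := by
  intro u v p
  induction p with
  | nil => exact SimpleGraph.Reachable.refl _
  | @cons u w v h p ih =>
    rw [toGraph, SimpleGraph.fromEdgeSet_adj] at h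
    have hmem : s(u.val, w.val) ∈ G' := by
      have h1 := h.1
      simp only [Set.mem_setOf_eq, Sym2.map_pair_eq] at h1
      exact h1
    have hadj : (SimpleGraph.fromEdgeSet (E : Set (Sym2 α))).Adj u.val w.val := by
      rw [SimpleGraph.fromEdgeSet_adj]
      exact ⟨hsub hmem, fun hEq => h.2 (Subtype.ext hEq)⟩
    exact hadj.reachable.trans ih

lemma decomp_G1_mem {x : α} {ζ : Finset α} {G : Finset (Sym2 α)}
    (hG : G ∈ graphsOn ζ) (hx : x ∈ ζ) :
    G.filter (fun e => ∀ y ∈ e, y ∈ compFin x ζ G)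
      ∈ (graphsOn (compFin x ζ G)).filter
          (fun H => (toGraph (compFin x ζ G) H).Connected) := by
  set S := compFin x ζ G with hS
  have hxS : x ∈ S := mem_compFin.2 ⟨hx, SimpleGraph.Reachable.refl x⟩
  rw [Finset.mem_filter]
  constructor
  · rw [mem_graphsOn]
    constructor
    · intro e he
      rw [Finset.mem_filter] at he
      rw [Finset.mem_sym2_iff]
      exact he.2
    · intro e he
      exact (mem_graphsOn.1 hG).2 e (Finset.mem_filter.1 he).1
  · haveI : Nonempty {y // y ∈ S} := ⟨⟨x, hxS⟩⟩
    refine ⟨?_⟩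
    intro u v
    have hu := (mem_compFin.1 u.2).2
    have hv := (mem_compFin.1 v.2).2
    rcases (hu.symm.trans hv) with ⟨p⟩
    have hclosed : ∀ a b, (SimpleGraph.fromEdgeSet (G : Set (Sym2 α))).Adj a b →
        a ∈ S → b ∈ S := fun a b h ha => comp_adj_closed hG h ha
    have hedge : ∀ a b, (SimpleGraph.fromEdgeSet (G : Set (Sym2 α))).Adj a b →
        a ∈ S → s(a, b) ∈ G.filter (fun e => ∀ y ∈ e, y ∈ S) := by
      intro a b h ha
      have hb := comp_adj_closed hG h ha
      rw [Finset.mem_filter]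
      refine ⟨((SimpleGraph.fromEdgeSet_adj _).1 h).1, ?_⟩
      intro y hy
      rcases Sym2.mem_iff.1 hy with rfl | rfl
      · exact ha
      · exact hb
    have := walk_to_reach_up hclosed hedge p u.2 v.2
    convert this using 2

lemma decomp_G2_mem {x : α} {ζ : Finset α} {G : Finset (Sym2 α)} (hG : G ∈ graphsOn ζ) :
    G \ G.filter (fun e => ∀ y ∈ e, y ∈ compFin x ζ G)
      ∈ graphsOn (ζ \ compFin x ζ G) := by
  set S := compFin x ζ G with hS
  rw [mem_graphsOn]
  constructor
  · intro e he
    rw [Finset.mem_sdiff, Finset.mem_filter] at he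
    have heG := he.1
    have hnot : ¬ ∀ y ∈ e, y ∈ S := fun h => he.2 ⟨heG, h⟩
    induction e using Sym2.ind with
    | _ a b =>
      have hab : a ∈ ζ ∧ b ∈ ζ := by
        have h2 := (mem_graphsOn.1 hG).1 heG
        rw [Finset.mem_sym2_iff] at h2
        exact ⟨h2 a (Sym2.mem_mk_left a b), h2 b (Sym2.mem_mk_right a b)⟩
      have hne : a ≠ b := by
        have := (mem_graphsOn.1 hG).2 _ heG
        simpa [Sym2.isDiag_iff_proj_eq] using this
      have hadj : (SimpleGraph.fromEdgeSet (G : Set (Sym2 α))).Adj a b :=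
        (SimpleGraph.fromEdgeSet_adj _).2 ⟨heG, hne⟩
      have haS : a ∉ S := by
        intro haS
        exact hnot (by
          intro y hy
          rcases Sym2.mem_iff.1 hy with rfl | rfl
          · exact haS
          · exact comp_adj_closed hG hadj haS)
      have hbS : b ∉ S := by
        intro hbS
        exact hnot (by
          intro y hy
          rcases Sym2.mem_iff.1 hy with rfl | rfl
          · exact comp_adj_closed hG hadj.symm hbS
          · exact hbS)
      rw [Finset.mem_sym2_iff]
      intro y hy
      rcases Sym2.mem_iff.1 hy with rfl | rfl
      · exact Finset.mem_sdiff.2 ⟨hab.1, haS⟩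
      · exact Finset.mem_sdiff.2 ⟨hab.2, hbS⟩
  · intro e he
    exact (mem_graphsOn.1 hG).2 e (Finset.mem_sdiff.1 he).1

lemma recomp_disj {ζ : Finset α} {S : Finset α} {G1 G2 : Finset (Sym2 α)}
    (hG1 : G1 ∈ graphsOn S) (hG2 : G2 ∈ graphsOn (ζ \ S)) : Disjoint G1 G2 := by
  rw [Finset.disjoint_left]
  intro e he1 he2
  have h1 := (mem_graphsOn.1 hG1).1 he1
  have h2 := (mem_graphsOn.1 hG2).1 he2
  rw [Finset.mem_sym2_iff] at h1 h2
  induction e using Sym2.ind with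
  | _ a b =>
    have := h1 a (Sym2.mem_mk_left a b)
    have := h2 a (Sym2.mem_mk_left a b)
    simp only [Finset.mem_sdiff] at this
    exact this.2 ‹a ∈ S›

lemma recomp_mem {ζ : Finset α} {S : Finset α} {G1 G2 : Finset (Sym2 α)} (hS : S ⊆ ζ)
    (hG1 : G1 ∈ graphsOn S) (hG2 : G2 ∈ graphsOn (ζ \ S)) :
    G1 ∪ G2 ∈ graphsOn ζ := by
  rw [mem_graphsOn]
  constructor
  · intro e he
    rcases Finset.mem_union.1 he with h | h
    · exact Finset.sym2_mono hS ((mem_graphsOn.1 hG1).1 h)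
    · exact Finset.sym2_mono (Finset.sdiff_subset) ((mem_graphsOn.1 hG2).1 h)
  · intro e he
    rcases Finset.mem_union.1 he with h | h
    · exact (mem_graphsOn.1 hG1).2 e h
    · exact (mem_graphsOn.1 hG2).2 e h

lemma recomp_comp {x : α} {ζ : Finset α} {S : Finset α} {G1 G2 : Finset (Sym2 α)}
    (hS : S ⊆ ζ) (hxS : x ∈ S)
    (hG1 : G1 ∈ graphsOn S) (hconn : (toGraph S G1).Connected)
    (hG2 : G2 ∈ graphsOn (ζ \ S)) :
    compFin x ζ (G1 ∪ G2) = S := by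
  have hclosed : ∀ a b, (SimpleGraph.fromEdgeSet ((G1 ∪ G2 : Finset (Sym2 α)) :
      Set (Sym2 α))).Adj a b → a ∈ S → b ∈ S := by
    intro a b h ha
    have hmem := ((SimpleGraph.fromEdgeSet_adj _).1 h).1
    rw [Finset.mem_coe, Finset.mem_union] at hmem
    rcases hmem with h1 | h2
    · have := (mem_graphsOn.1 hG1).1 h1
      rw [Finset.mem_sym2_iff] at this
      exact this b (Sym2.mem_mk_right a b)
    · have := (mem_graphsOn.1 hG2).1 h2
      rw [Finset.mem_sym2_iff] at this
      exact absurd ha (Finset.mem_sdiff.1 (this a (Sym2.mem_mk_left a b))).2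
  ext y
  rw [mem_compFin]
  constructor
  · rintro ⟨hyζ, ⟨p⟩⟩
    exact walk_closed (K := fun z => z ∈ S) hclosed p hxS
  · intro hyS
    refine ⟨hS hyS, ?_⟩
    rcases hconn.preconnected ⟨x, hxS⟩ ⟨y, hyS⟩ with ⟨p⟩
    exact walk_down Finset.subset_union_left p

lemma recomp_filter {ζ : Finset α} {S : Finset α} {G1 G2 : Finset (Sym2 α)}
    (hG1 : G1 ∈ graphsOn S) (hG2 : G2 ∈ graphsOn (ζ \ S)) :
    (G1 ∪ G2).filter (fun e => ∀ y ∈ e, y ∈ S) = G1 := by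
  ext e
  rw [Finset.mem_filter, Finset.mem_union]
  constructor
  · rintro ⟨h1 | h2, hall⟩
    · exact h1
    · exfalso
      have := (mem_graphsOn.1 hG2).1 h2
      rw [Finset.mem_sym2_iff] at this
      induction e using Sym2.ind with
      | _ a b =>
        exact (Finset.mem_sdiff.1 (this a (Sym2.mem_mk_left a b))).2
          (hall a (Sym2.mem_mk_left a b))
  · intro h
    refine ⟨Or.inl h, ?_⟩
    have := (mem_graphsOn.1 hG1).1 h
    rw [Finset.mem_sym2_iff] at this
    exact this

lemma gibbs_recursion (β : ℝ) (φ : α → α → ℝ) (hφ : ∀ x y, φ x y = φ y x)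
    {x : α} {ζ : Finset α} (hx : x ∈ ζ) :
    gibbs β φ hφ ζ = ∑ S ∈ ζ.powerset,
      (if x ∈ S then ursell β φ hφ S * gibbs β φ hφ (ζ \ S) else 0) := by
  classical
  rw [← Finset.sum_filter]
  set w : Sym2 α → ℝ := fun e => Real.exp (-β * Sym2.lift ⟨φ, hφ⟩ e) - 1 with hw
  have hper : ∀ S ∈ ζ.powerset.filter (fun S => x ∈ S),
      ursell β φ hφ S * gibbs β φ hφ (ζ \ S)
        = ∑ p ∈ ((graphsOn S).filter (fun H => (toGraph S H).Connected))
            ×ˢ graphsOn (ζ \ S), (∏ e ∈ p.1, w e) * ∏ e ∈ p.2, w e := by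
    intro S _
    rw [ursell, gibbs_eq_sum, Finset.sum_mul_sum, Finset.sum_product]
  rw [Finset.sum_congr rfl hper]
  rw [← Finset.sum_sigma (ζ.powerset.filter (fun S => x ∈ S))
    (fun S => ((graphsOn S).filter (fun H => (toGraph S H).Connected))
      ×ˢ graphsOn (ζ \ S))
    (fun q => (∏ e ∈ q.2.1, w e) * ∏ e ∈ q.2.2, w e)]
  rw [gibbs_eq_sum]
  apply Finset.sum_bij' (i := fun (G : Finset (Sym2 α)) (_ : G ∈ graphsOn ζ) =>
      (⟨compFin x ζ G, (G.filter (fun e => ∀ y ∈ e, y ∈ compFin x ζ G),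
        G \ G.filter (fun e => ∀ y ∈ e, y ∈ compFin x ζ G))⟩ :
        Σ _ : Finset α, Finset (Sym2 α) × Finset (Sym2 α)))
    (j := fun q _ => q.2.1 ∪ q.2.2)
  · intro G hG
    rw [Finset.mem_sigma, Finset.mem_filter, Finset.mem_powerset]
    refine ⟨⟨Finset.filter_subset _ _, mem_compFin.2 ⟨hx, SimpleGraph.Reachable.refl x⟩⟩, ?_⟩
    rw [Finset.mem_product]
    exact ⟨decomp_G1_mem hG hx, decomp_G2_mem hG⟩
  · rintro ⟨S, G1, G2⟩ hq
    rw [Finset.mem_sigma, Finset.mem_filter, Finset.mem_powerset, Finset.mem_product] at hq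
    obtain ⟨⟨hS, _⟩, hG1, hG2⟩ := hq
    rw [Finset.mem_filter] at hG1
    exact recomp_mem hS hG1.1 hG2
  · intro G hG
    exact Finset.union_sdiff_of_subset (Finset.filter_subset _ _)
  · rintro ⟨S, G1, G2⟩ hq
    rw [Finset.mem_sigma, Finset.mem_filter, Finset.mem_powerset, Finset.mem_product] at hq
    obtain ⟨⟨hS, hxS⟩, hG1, hG2⟩ := hq
    rw [Finset.mem_filter] at hG1
    have h1 : compFin x ζ (G1 ∪ G2) = S := recomp_comp hS hxS hG1.1 hG1.2 hG2
    have hdisj : Disjoint G1 G2 := recomp_disj hG1.1 hG2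
    show (⟨compFin x ζ (G1 ∪ G2), _⟩ : Σ _ : Finset α, Finset (Sym2 α) × Finset (Sym2 α)) = _
    rw [h1, recomp_filter hG1.1 hG2, Finset.union_sdiff_cancel_left hdisj]
  · intro G hG
    have hsub : G.filter (fun e => ∀ y ∈ e, y ∈ compFin x ζ G) ⊆ G := Finset.filter_subset _ _
    rw [← Finset.prod_union Finset.disjoint_sdiff, Finset.union_sdiff_of_subset hsub]

end Comp

section Energy
variable {α : Type*} [DecidableEq α]

lemma pair_filter_insert {x₀ : α} {η : Finset α} (hx₀ : x₀ ∉ η) :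
    (insert x₀ η).sym2.filter (fun e => ¬ e.IsDiag)
      = (η.image fun y => s(x₀, y)) ∪ η.sym2.filter (fun e => ¬ e.IsDiag) := by
  ext e
  simp only [Finset.mem_filter, Finset.mem_union, Finset.mem_image]
  induction e using Sym2.ind with
  | _ a b =>
    simp only [Finset.mk_mem_sym2_iff, Finset.mem_insert, Sym2.isDiag_iff_proj_eq]
    constructor
    · rintro ⟨⟨ha | ha, hb | hb⟩, hne⟩
      · exact absurd (ha.trans hb.symm) hne
      · exact Or.inl ⟨b, hb, by rw [ha]⟩
      · exact Or.inl ⟨a, ha, Sym2.eq_swap ▸ (by rw [hb])⟩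
      · exact Or.inr ⟨⟨ha, hb⟩, hne⟩
    · rintro (⟨y, hy, hEq⟩ | ⟨⟨ha, hb⟩, hne⟩)
      · rw [Sym2.eq_iff] at hEq
        rcases hEq with ⟨rfl, rfl⟩ | ⟨rfl, rfl⟩
        · exact ⟨⟨Or.inl rfl, Or.inr hy⟩, fun h => hx₀ (h ▸ hy)⟩
        · exact ⟨⟨Or.inr hy, Or.inl rfl⟩, fun h => hx₀ (h ▸ hy)⟩
      · exact ⟨⟨Or.inr ha, Or.inr hb⟩, hne⟩

lemma energy_insert (φ : α → α → ℝ) (hφ : ∀ x y, φ x y = φ y x)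
    {x₀ : α} {η : Finset α} (hx₀ : x₀ ∉ η) :
    energy φ hφ (insert x₀ η) = (∑ y ∈ η, φ x₀ y) + energy φ hφ η := by
  rw [energy, pair_filter_insert hx₀, Finset.sum_union, energy]
  · congr 1
    rw [Finset.sum_image]
    · exact Finset.sum_congr rfl fun y _ => Sym2.lift_mk _ _ _
    · intro y hy y' _ hEq
      rw [Sym2.eq_iff] at hEq
      rcases hEq with ⟨_, h⟩ | ⟨h, h'⟩
      · exact h
      · exact absurd (h' ▸ hy) hx₀
  · rw [Finset.disjoint_left]
    rintro e he he'
    rcases Finset.mem_image.1 he with ⟨y, hy, rfl⟩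
    rw [Finset.mem_filter, Finset.mem_sym2_iff] at he'
    exact hx₀ (he'.1 x₀ (Sym2.mem_mk_left _ _))

lemma gibbs_insert (β : ℝ) (φ : α → α → ℝ) (hφ : ∀ x y, φ x y = φ y x)
    {x₀ : α} {η : Finset α} (hx₀ : x₀ ∉ η) :
    gibbs β φ hφ (insert x₀ η)
      = Real.exp (-β * ∑ y ∈ η, φ x₀ y) * gibbs β φ hφ η := by
  rw [gibbs, gibbs, energy_insert φ hφ hx₀, mul_add, Real.exp_add]

end Energy

section Main1
variable {α : Type*} [DecidableEq α]

lemma main1 (β : ℝ) (φ : α → α → ℝ) (hφ : ∀ x y, φ x y = φ y x) (ζ : Finset α) :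
    ∑ ζ₁ ∈ ζ.powerset, expStar (fun η => - ursell β φ hφ η) ζ₁ * gibbs β φ hφ (ζ \ ζ₁)
      = if ζ = ∅ then 1 else 0 := by
  classical
  rcases eq_or_ne ζ ∅ with rfl | hne
  · rw [if_pos rfl]
    rw [Finset.powerset_empty, Finset.sum_singleton, expStar_empty]
    simp [gibbs_empty]
  · rw [if_neg hne]
    obtain ⟨x, hx⟩ := Finset.nonempty_iff_ne_empty.2 hne
    set E : Finset α → ℝ := expStar (fun η => - ursell β φ hφ η) with hE
    have hk0 : (fun η : Finset α => - ursell β φ hφ η) ∅ = 0 := by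
      simp [ursell_empty β φ hφ]
    have key : ∀ ζ₁ ∈ ζ.powerset, E ζ₁ * gibbs β φ hφ (ζ \ ζ₁)
        = (∑ S ∈ ζ₁.powerset,
            (if x ∈ S then (- ursell β φ hφ S)
              * (E (ζ₁ \ S) * gibbs β φ hφ ((ζ \ S) \ (ζ₁ \ S))) else 0))
          + (∑ S ∈ (ζ \ ζ₁).powerset,
            (if x ∈ S then ursell β φ hφ S * (E ζ₁ * gibbs β φ hφ ((ζ \ S) \ ζ₁)) else 0)) := by
      intro ζ₁ hζ₁
      rw [Finset.mem_powerset] at hζ₁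
      by_cases hxζ₁ : x ∈ ζ₁
      · have h2 : ∑ S ∈ (ζ \ ζ₁).powerset,
            (if x ∈ S then ursell β φ hφ S * (E ζ₁ * gibbs β φ hφ ((ζ \ S) \ ζ₁)) else 0)
              = 0 := by
          apply Finset.sum_eq_zero
          intro S hS
          rw [Finset.mem_powerset] at hS
          by_cases hxS : x ∈ S
          · exact absurd hxζ₁ (Finset.mem_sdiff.1 (hS hxS)).2
          · rw [if_neg hxS]
        rw [h2, add_zero, hE, expStar_deriv hk0 hxζ₁, Finset.sum_mul]
        apply Finset.sum_congr rfl
        intro S hS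
        rw [Finset.mem_powerset] at hS
        by_cases hxS : x ∈ S
        · rw [if_pos hxS, if_pos hxS]
          have hiden : (ζ \ S) \ (ζ₁ \ S) = ζ \ ζ₁ := by
            ext y
            simp only [Finset.mem_sdiff]
            constructor
            · rintro ⟨⟨hyζ, hyS⟩, h⟩
              refine ⟨hyζ, fun hyζ₁ => h ⟨hyζ₁, hyS⟩⟩
            · rintro ⟨hyζ, hyζ₁⟩
              exact ⟨⟨hyζ, fun hyS => hyζ₁ (hS hyS)⟩, fun h => hyζ₁ h.1⟩
          rw [hiden]; ring
        · rw [if_neg hxS, if_neg hxS, zero_mul]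
      · have h1 : ∑ S ∈ ζ₁.powerset,
            (if x ∈ S then (- ursell β φ hφ S)
              * (E (ζ₁ \ S) * gibbs β φ hφ ((ζ \ S) \ (ζ₁ \ S))) else 0)
              = 0 := by
          apply Finset.sum_eq_zero
          intro S hS
          rw [Finset.mem_powerset] at hS
          by_cases hxS : x ∈ S
          · exact absurd (hS hxS) hxζ₁
          · rw [if_neg hxS]
        rw [h1, zero_add]
        have hx' : x ∈ ζ \ ζ₁ := Finset.mem_sdiff.2 ⟨hx, hxζ₁⟩
        rw [gibbs_recursion β φ hφ hx', Finset.mul_sum]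
        apply Finset.sum_congr rfl
        intro S hS
        rw [Finset.mem_powerset] at hS
        by_cases hxS : x ∈ S
        · rw [if_pos hxS, if_pos hxS, sdiff_sdiff_comm]; ring
        · rw [if_neg hxS, if_neg hxS, mul_zero]
    rw [Finset.sum_congr rfl key, Finset.sum_add_distrib]
    rw [swap2 ζ (fun S C => if x ∈ S then (- ursell β φ hφ S)
      * (E C * gibbs β φ hφ ((ζ \ S) \ C)) else 0)]
    rw [sum_comm_disjoint ζ (fun ζ₁ S =>
      if x ∈ S then ursell β φ hφ S * (E ζ₁ * gibbs β φ hφ ((ζ \ S) \ ζ₁)) else 0)]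
    rw [← Finset.sum_add_distrib]
    apply Finset.sum_eq_zero
    intro S _
    rw [← Finset.sum_add_distrib]
    apply Finset.sum_eq_zero
    intro C _
    by_cases hxS : x ∈ S
    · rw [if_pos hxS, if_pos hxS]; ring
    · rw [if_neg hxS, if_neg hxS, add_zero]

end Main1
end KR

/-- `k̄` satisfies the recursion: for all disjoint finite `ω, ζ` with `ω ≠ ∅` and every `x₀ ∈ ω`,
`k̄(ω, ζ) = e^{−β·W({x₀}, ω \ {x₀})} · Σ_{ω' ⊆ ζ} (∏_{x ∈ ω'} (e^{−βφ(x₀,x)} − 1)) ·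
k̄((ω \ {x₀}) ∪ ω', ζ \ ω')`, together with the initial condition `k̄(∅, ζ) = 1*(ζ)`. -/
theorem kbar_recursion (β : ℝ) (hβ : 0 < β) (φ : α → α → ℝ)
    (hφ : ∀ x y, φ x y = φ y x) :
    (∀ ω ζ : Finset α, Disjoint ω ζ → ω ≠ ∅ → ∀ x₀ ∈ ω,
      kbar β φ hφ ω ζ =
        Real.exp (-β * ∑ y ∈ ω.erase x₀, φ x₀ y) *
          ∑ ω' ∈ ζ.powerset,
            (∏ x ∈ ω', (Real.exp (-β * φ x₀ x) - 1)) *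
              kbar β φ hφ ((ω.erase x₀) ∪ ω') (ζ \ ω')) ∧
    (∀ ζ : Finset α, kbar β φ hφ ∅ ζ = if ζ = ∅ then 1 else 0) := by
  classical
  constructor
  · intro ω ζ hdisj hω x₀ hx₀
    have hx₀ζ : x₀ ∉ ζ := Finset.disjoint_left.1 hdisj hx₀
    have hω₀ω : ω.erase x₀ ⊆ ω := Finset.erase_subset _ _
    have hωins : insert x₀ (ω.erase x₀) = ω := Finset.insert_erase hx₀
    have lhs_eq : ∀ ζ₁ ∈ ζ.powerset,
        expStar (fun η => - ursell β φ hφ η) ζ₁ * Dop ω (gibbs β φ hφ) (ζ \ ζ₁)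
          = ∑ ω' ∈ (ζ \ ζ₁).powerset,
              Real.exp (-β * ∑ y ∈ ω.erase x₀, φ x₀ y)
                * (expStar (fun η => - ursell β φ hφ η) ζ₁
                  * ((∏ y ∈ ω', (Real.exp (-β * φ x₀ y) - 1))
                    * gibbs β φ hφ (ω.erase x₀ ∪ (ζ \ ζ₁)))) := by
      intro ζ₁ hζ₁
      rw [Finset.mem_powerset] at hζ₁
      have hdisj2 : Disjoint (ζ \ ζ₁) ω := hdisj.symm.mono_left Finset.sdiff_subset
      have hx₀out : x₀ ∉ ω.erase x₀ ∪ (ζ \ ζ₁) := by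
        simp only [Finset.mem_union, Finset.mem_sdiff]
        rintro (h | ⟨h, _⟩)
        · exact Finset.notMem_erase x₀ ω h
        · exact hx₀ζ h
      have hDop : Dop ω (gibbs β φ hφ) (ζ \ ζ₁) = gibbs β φ hφ ((ζ \ ζ₁) ∪ ω) :=
        if_pos hdisj2
      have hU : (ζ \ ζ₁) ∪ ω = insert x₀ (ω.erase x₀ ∪ (ζ \ ζ₁)) := by
        rw [Finset.union_comm]
        conv_lhs => rw [← hωins]
        rw [Finset.insert_union]
      have hsplit : ∑ y ∈ ω.erase x₀ ∪ (ζ \ ζ₁), φ x₀ y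
          = (∑ y ∈ ω.erase x₀, φ x₀ y) + ∑ y ∈ ζ \ ζ₁, φ x₀ y :=
        Finset.sum_union (hdisj.mono hω₀ω Finset.sdiff_subset)
      have hprod : Real.exp (-β * ∑ y ∈ ζ \ ζ₁, φ x₀ y)
          = ∑ ω' ∈ (ζ \ ζ₁).powerset, ∏ y ∈ ω', (Real.exp (-β * φ x₀ y) - 1) := by
        rw [Finset.mul_sum, Real.exp_sum]
        have hterm : ∀ y ∈ ζ \ ζ₁, Real.exp (-β * φ x₀ y)
            = (Real.exp (-β * φ x₀ y) - 1) + 1 := by intro y _; ring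
        rw [Finset.prod_congr rfl hterm, Finset.prod_add]
        exact Finset.sum_congr rfl fun ω' _ => by simp
      rw [hDop, hU, KR.gibbs_insert β φ hφ hx₀out, hsplit, mul_add, Real.exp_add, hprod]
      calc expStar (fun η => - ursell β φ hφ η) ζ₁
            * ((Real.exp (-β * ∑ y ∈ ω.erase x₀, φ x₀ y)
                * ∑ ω' ∈ (ζ \ ζ₁).powerset, ∏ y ∈ ω', (Real.exp (-β * φ x₀ y) - 1))
              * gibbs β φ hφ (ω.erase x₀ ∪ (ζ \ ζ₁)))
          = (∑ ω' ∈ (ζ \ ζ₁).powerset, ∏ y ∈ ω', (Real.exp (-β * φ x₀ y) - 1))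
              * (Real.exp (-β * ∑ y ∈ ω.erase x₀, φ x₀ y)
                * (expStar (fun η => - ursell β φ hφ η) ζ₁
                  * gibbs β φ hφ (ω.erase x₀ ∪ (ζ \ ζ₁)))) := by ring
        _ = ∑ ω' ∈ (ζ \ ζ₁).powerset, (∏ y ∈ ω', (Real.exp (-β * φ x₀ y) - 1))
              * (Real.exp (-β * ∑ y ∈ ω.erase x₀, φ x₀ y)
                * (expStar (fun η => - ursell β φ hφ η) ζ₁
                  * gibbs β φ hφ (ω.erase x₀ ∪ (ζ \ ζ₁)))) := Finset.sum_mul _ _ _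
        _ = _ := by
              apply Finset.sum_congr rfl
              intro ω' _
              ring
    have kbar_lhs : kbar β φ hφ ω ζ
        = ∑ ζ₁ ∈ ζ.powerset, expStar (fun η => - ursell β φ hφ η) ζ₁
            * Dop ω (gibbs β φ hφ) (ζ \ ζ₁) := rfl
    rw [kbar_lhs, Finset.sum_congr rfl lhs_eq,
      KR.sum_comm_disjoint ζ (fun ζ₁ ω' =>
        Real.exp (-β * ∑ y ∈ ω.erase x₀, φ x₀ y)
          * (expStar (fun η => - ursell β φ hφ η) ζ₁
            * ((∏ y ∈ ω', (Real.exp (-β * φ x₀ y) - 1))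
              * gibbs β φ hφ (ω.erase x₀ ∪ (ζ \ ζ₁))))),
      Finset.mul_sum ζ.powerset (fun ω' => (∏ x ∈ ω', (Real.exp (-β * φ x₀ x) - 1))
        * kbar β φ hφ (ω.erase x₀ ∪ ω') (ζ \ ω'))
        (Real.exp (-β * ∑ y ∈ ω.erase x₀, φ x₀ y))]
    apply Finset.sum_congr rfl
    intro ω' hω'
    rw [Finset.mem_powerset] at hω'
    have kbar_rhs : kbar β φ hφ (ω.erase x₀ ∪ ω') (ζ \ ω')
        = ∑ ζ₁ ∈ (ζ \ ω').powerset, expStar (fun η => - ursell β φ hφ η) ζ₁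
            * Dop (ω.erase x₀ ∪ ω') (gibbs β φ hφ) ((ζ \ ω') \ ζ₁) := rfl
    rw [kbar_rhs]
    have step1 : ∀ ζ₁ ∈ (ζ \ ω').powerset,
        Real.exp (-β * ∑ y ∈ ω.erase x₀, φ x₀ y)
          * (expStar (fun η => - ursell β φ hφ η) ζ₁
            * ((∏ y ∈ ω', (Real.exp (-β * φ x₀ y) - 1))
              * gibbs β φ hφ (ω.erase x₀ ∪ (ζ \ ζ₁))))
        = (expStar (fun η => - ursell β φ hφ η) ζ₁
            * Dop (ω.erase x₀ ∪ ω') (gibbs β φ hφ) ((ζ \ ω') \ ζ₁))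
          * (Real.exp (-β * ∑ y ∈ ω.erase x₀, φ x₀ y)
            * ∏ y ∈ ω', (Real.exp (-β * φ x₀ y) - 1)) := by
      intro ζ₁ hζ₁
      rw [Finset.mem_powerset] at hζ₁
      have hdisj3 : Disjoint ((ζ \ ω') \ ζ₁) (ω.erase x₀ ∪ ω') := by
          rw [Finset.disjoint_union_right]
          constructor
          · exact (hdisj.symm.mono_left (Finset.sdiff_subset.trans Finset.sdiff_subset)).mono_right
              hω₀ω
          · exact Finset.sdiff_disjoint.mono_left Finset.sdiff_subset
      have hDop : Dop (ω.erase x₀ ∪ ω') (gibbs β φ hφ) ((ζ \ ω') \ ζ₁)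
            = gibbs β φ hφ (((ζ \ ω') \ ζ₁) ∪ (ω.erase x₀ ∪ ω')) := if_pos hdisj3
      have hU2 : ((ζ \ ω') \ ζ₁) ∪ (ω.erase x₀ ∪ ω') = ω.erase x₀ ∪ (ζ \ ζ₁) := by
          ext y
          simp only [Finset.mem_union, Finset.mem_sdiff]
          constructor
          · rintro (⟨⟨hyζ, hyω'⟩, hyζ₁⟩ | h | hyω')
            · exact Or.inr ⟨hyζ, hyζ₁⟩
            · exact Or.inl h
            · refine Or.inr ⟨hω' hyω', fun hyζ₁ => ?_⟩
              exact (Finset.mem_sdiff.1 (hζ₁ hyζ₁)).2 hyω'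
          · rintro (h | ⟨hyζ, hyζ₁⟩)
            · exact Or.inr (Or.inl h)
            · by_cases hyω' : y ∈ ω'
              · exact Or.inr (Or.inr hyω')
              · exact Or.inl ⟨⟨hyζ, hyω'⟩, hyζ₁⟩
      rw [hDop, hU2]
      ring
    rw [Finset.sum_congr rfl step1, ← Finset.sum_mul]
    ring
  · intro ζ
    have h : kbar β φ hφ ∅ ζ
        = ∑ ζ₁ ∈ ζ.powerset, expStar (fun η => - ursell β φ hφ η) ζ₁
            * gibbs β φ hφ (ζ \ ζ₁) := by
      apply Finset.sum_congr rfl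
      intro ζ₁ _
      congr 1
      show Dop ∅ (gibbs β φ hφ) (ζ \ ζ₁) = gibbs β φ hφ (ζ \ ζ₁)
      simp [Dop]
    rw [h, KR.main1 β φ hφ ζ]

end
end
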